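/- arXiv:1912.01764 — 2 statements merged into one kernel-verified Lean document; each statement's English description precedes it below -/
import Mathlib

section
/- In the Benders iteration, if at the end of an iteration every sub-problem is feasible (the infeasible set is empty), then the current master solution together with the sub-problem recourse solutions constitutes a feasible solution of the extensive formulation achieving the master objective value, and hence is optimal for the extensive problem when the master is a relaxation. -/
theorem IsLeast.of_subset_of_mem {γ : Type*} [Preorder γ] {s t : Set γ} {a : γ}
    (h : IsLeast t a) (hst : s ⊆ t) (ha : a ∈ s) : IsLeast s a :=
  ⟨ha, lowerBounds_mono_set hst h.2⟩

theorem isLeast_image_of_relaxation {α γ : Type*} [Preorder γ] {f : α → γ} {s t : Set α}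
    {x : α} (hst : s ⊆ t) (hx : x ∈ s) (h : IsLeast (f '' t) (f x)) : IsLeast (f '' s) (f x) :=
  h.of_subset_of_mem (Set.image_mono hst) (Set.mem_image_of_mem f hx)

/-- Benders convergence: if the master optimum admits recourse for every
contingency, it is optimal for the extensive problem. -/
theorem benders_master_optimal_when_subproblems_feasible
    {α β C : Type*} (f : α → ℝ)
    (B : α → Prop) (G : C → α → β → Prop) (cuts : α → Prop)
    (hvalid : ∀ x, (B x ∧ ∀ c, ∃ y, G c x y) → cuts x)
    (xs : α)
    (hxs : xs ∈ {x | B x ∧ cuts x})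
    (hmaster : IsLeast (f '' {x | B x ∧ cuts x}) (f xs))
    (hfeas : ∀ c, ∃ y, G c xs y) :
    IsLeast (f '' {x | B x ∧ ∀ c, ∃ y, G c x y}) (f xs) := by
  have hrelax : {x | B x ∧ ∀ c, ∃ y, G c x y} ⊆ {x | B x ∧ cuts x} :=
    fun x hx => ⟨hx.1, hvalid x hx⟩
  exact isLeast_image_of_relaxation hrelax ⟨hxs.1, hfeas⟩ hmaster
end

section
/- The minimum down-time constraints are valid: if u, v ∈ {0,1}^T satisfy v_{g,t} ≥ u_{g,t} - u_{g,t-1} and Σ_{q=t+1}^{t+DT} v_{g,q} ≤ 1 - u_{g,t} for all t ≤ T - DT, then whenever the unit shuts down at time s (u_{g,s-1} = 1, u_{g,s} = 0), it stays off for at least DT consecutive periods: u_{g,t} = 0 for all s ≤ t ≤ s + DT - 1 (within horizon). -/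
open Finset

lemma antitoneOn_Icc_of_no_startup {u v : ℕ → ℝ} {a b : ℕ}
    (hlink : ∀ t, a < t → t ≤ b → u t - u (t - 1) ≤ v t)
    (hv : ∀ t, a < t → t ≤ b → v t = 0) : AntitoneOn u (Set.Icc a b) := by
  refine antitoneOn_of_succ_le Set.ordConnected_Icc fun t _ ht hsucc => ?_
  rw [Order.succ_eq_add_one] at hsucc ⊢
  have hat : a < t + 1 := Nat.lt_succ_of_le ht.1
  have hstep := hlink (t + 1) hat hsucc.2
  rw [hv (t + 1) hat hsucc.2, Nat.add_sub_cancel] at hstep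
  linarith

theorem min_down_time_valid_general (T DT : ℕ)
    (u v : ℕ → ℝ)
    (hu : ∀ t, u t = 0 ∨ u t = 1) (hv : ∀ t, v t = 0 ∨ v t = 1)
    (hlink : ∀ t, 1 ≤ t → t ≤ T → u t - u (t - 1) ≤ v t)
    (hmindown : ∀ t, t + DT ≤ T →
      ∑ q ∈ Finset.Icc (t + 1) (t + DT), v q ≤ 1 - u t)
    (s : ℕ) (hs1 : 1 ≤ s) (hsT : s + DT - 1 ≤ T)
    (hdown : u (s - 1) = 1) (hoff : u s = 0) :
    ∀ t, s ≤ t → t ≤ s + DT - 1 → u t = 0 := by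
  intro t hst hts
  have hv_nonneg : ∀ q ∈ Icc s (s + DT - 1), 0 ≤ v q := fun q _ =>
    (hv q).elim (fun h => h.ge) (fun h => h ▸ zero_le_one)
  -- The unit is on at `s - 1`, so the min-down window starting there admits no start-up.
  have hno_startup : ∀ q ∈ Icc s (s + DT - 1), v q = 0 := by
    have hwindow := hmindown (s - 1) (by omega)
    rw [hdown, sub_self, show s - 1 + 1 = s by omega, show s - 1 + DT = s + DT - 1 by omega]
      at hwindow
    exact (sum_eq_zero_iff_of_nonneg hv_nonneg).mp (hwindow.antisymm (sum_nonneg hv_nonneg))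
  have hanti : AntitoneOn u (Set.Icc s (s + DT - 1)) :=
    antitoneOn_Icc_of_no_startup (fun q hq hqb => hlink q (by omega) (by omega))
      (fun q hq hqb => hno_startup q (mem_Icc.mpr ⟨hq.le, hqb⟩))
  have hle : u t ≤ u s := hanti ⟨le_rfl, hst.trans hts⟩ ⟨hst, hts⟩ hst
  rcases hu t with h | h
  · exact h
  · linarith

/-- Validity of the minimum down-time constraints: a unit that shuts down at
time `s` stays off for at least `DT` consecutive periods (within horizon). -/
theorem min_down_time_valid (T DT : ℕ) (hDT : 1 ≤ DT) (hDTT : DT ≤ T)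
    (u v : ℕ → ℝ)
    (hu : ∀ t, u t = 0 ∨ u t = 1) (hv : ∀ t, v t = 0 ∨ v t = 1)
    (hlink : ∀ t, 1 ≤ t → t ≤ T → u t - u (t - 1) ≤ v t)
    (hon : ∀ t, 1 ≤ t → t ≤ T → v t ≤ u t)
    (hmindown : ∀ t, t + DT ≤ T →
      ∑ q ∈ Finset.Icc (t + 1) (t + DT), v q ≤ 1 - u t)
    (s : ℕ) (hs1 : 1 ≤ s) (hsT : s + DT - 1 ≤ T)
    (hdown : u (s - 1) = 1) (hoff : u s = 0) :
    ∀ t, s ≤ t → t ≤ s + DT - 1 → u t = 0 :=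
  min_down_time_valid_general T DT u v hu hv hlink hmindown s hs1 hsT hdown hoff
end
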